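/- Let K be a commutative ring with unity, let v, w : ℤ → K, let α, β ∈ ℤ, and let s, r be natural numbers. Then the (r+1)×(r+1) matrix with (i,j) entry S^V_{α,β-j}[s+i+j, s+j] (0 ≤ i, j ≤ r) equals the product of the lower-triangular matrix with (i,j) entry S^V_{α,β-j}[s+i, s+j] and the upper-triangular matrix with (i,j) entry S^V_{α+s+i,β-j}[j, j-i]; equivalently, for all 0 ≤ i, j ≤ r, S^V_{α,β-j}[s+i+j, s+j] = ∑_{k=0}^{r} S^V_{α,β-k}[s+i, s+k] · S^V_{α+s+k,β-j}[j, j-k]. -/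
import Mathlib


open Finset Polynomial

variable {K : Type*} [CommRing K]

/-- Elementary symmetric function `e_t` of the entries of a list. -/
def esymmList : List K → ℕ → K
  | _, 0 => 1
  | [], _ + 1 => 0
  | a :: l, t + 1 => a * esymmList l t + esymmList l (t + 1)

/-- Complete homogeneous symmetric function `h_t` of the entries of a list. -/
def hsymmList : List K → ℕ → K
  | _, 0 => 1
  | [], _ + 1 => 0
  | a :: l, t + 1 => a * hsymmList (a :: l) t + hsymmList l (t + 1)
  termination_by l t => (l.length, t)

/-- The V-Stirling number of the first kind
`c^V_{α,β}[n,k] = e_{n-k}(v(α+n-1)w(β), …, v(α)w(β+n-1))`,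
set to `0` unless `0 ≤ k ≤ n`. -/
def cV (v w : ℤ → K) (α β n k : ℤ) : K :=
  if 0 ≤ k ∧ k ≤ n then
    esymmList (List.ofFn fun j : Fin n.toNat =>
      v (α + n - 1 - (j : ℕ)) * w (β + (j : ℕ))) (n - k).toNat
  else 0

/-- The V-Stirling number of the second kind
`S^V_{α,β}[n,k] = h_{n-k}(v(α+k)w(β), …, v(α)w(β+k))`,
set to `0` unless `0 ≤ k ≤ n`. -/
def SV (v w : ℤ → K) (α β n k : ℤ) : K :=
  if 0 ≤ k ∧ k ≤ n then
    hsymmList (List.ofFn fun j : Fin (k.toNat + 1) =>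
      v (α + k - (j : ℕ)) * w (β + (j : ℕ))) (n - k).toNat
  else 0

lemma hsymmList_cons (a : K) (l : List K) (t : ℕ) :
    hsymmList (a::l) (t+1) = a * hsymmList (a::l) t + hsymmList l (t+1) := by rw [hsymmList]
lemma hsymmList_nil (t : ℕ) : hsymmList ([] : List K) (t+1) = 0 := by rw [hsymmList]
lemma hsymmList_zero (l : List K) : hsymmList l 0 = 1 := by rw [hsymmList]
lemma hsymm_concat : ∀ (t : ℕ) (L : List K) (b : K),
    hsymmList (L ++ [b]) (t+1) = hsymmList L (t+1) + b * hsymmList (L ++ [b]) t := by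
  intro t
  induction t with
  | zero =>
    intro L b
    induction L with
    | nil => simp [hsymmList]
    | cons a L ih =>
      rw [List.cons_append, hsymmList_cons, ih, hsymmList_cons]
      simp [hsymmList_zero]; ring
  | succ t iht =>
    intro L b
    induction L with
    | nil => simp only [List.nil_append, hsymmList_nil, hsymmList_cons, zero_add]; ring
    | cons a L ihL =>
      rw [List.cons_append, hsymmList_cons a (L++[b]) (t+1)]
      conv_lhs => rw [← List.cons_append, iht (a::L) b, ihL]
      conv_rhs => rw [hsymmList_cons a L (t+1), hsymmList_cons a (L++[b]) t]
      rw [List.cons_append]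
      ring

/-- `h_t` with integer degree, zero for negative degree. -/
def Hd (L : List K) (t : ℤ) : K := if 0 ≤ t then hsymmList L t.toNat else 0

lemma Hd_neg {t : ℤ} (L : List K) (h : t < 0) : Hd L t = 0 := by
  simp [Hd, not_le.mpr h]

lemma Hd_natCast (L : List K) (t : ℕ) : Hd L (t : ℤ) = hsymmList L t := by
  simp [Hd]

lemma Hd_nil {t : ℤ} (h : t ≠ 0) : Hd ([] : List K) t = 0 := by
  rcases lt_or_gt_of_ne h with h' | h'
  · exact Hd_neg _ h'
  · rw [Hd, if_pos h'.le]
    obtain ⟨n, hn⟩ : ∃ n : ℕ, t.toNat = n + 1 := ⟨t.toNat - 1, by omega⟩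
    rw [hn, hsymmList_nil]

lemma Hd_cons (b : K) (L : List K) (t : ℤ) :
    Hd (b :: L) t = b * Hd (b :: L) (t - 1) + Hd L t := by
  rcases lt_trichotomy t 0 with h | h | h
  · rw [Hd_neg (b::L) h, Hd_neg (b::L) (show t-1 < 0 by omega), Hd_neg L h]; ring
  · subst h
    rw [Hd_neg (b::L) (show (0:ℤ)-1 < 0 by norm_num)]
    simp [Hd, hsymmList_zero]
  · have h0 : (0:ℤ) ≤ t := h.le
    have h1 : (0:ℤ) ≤ t - 1 := by omega
    simp only [Hd, if_pos h0, if_pos h1]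
    have h2 : t.toNat = (t-1).toNat + 1 := by omega
    rw [h2, hsymmList_cons]

lemma Hd_concat (L : List K) (b : K) (t : ℤ) :
    Hd (L ++ [b]) t = Hd L t + b * Hd (L ++ [b]) (t - 1) := by
  rcases lt_trichotomy t 0 with h | h | h
  · rw [Hd_neg (L++[b]) h, Hd_neg (L++[b]) (show t-1 < 0 by omega), Hd_neg L h]; ring
  · subst h
    rw [Hd_neg (L++[b]) (show (0:ℤ)-1 < 0 by norm_num)]
    simp [Hd, hsymmList_zero]
  · have h0 : (0:ℤ) ≤ t := h.le
    have h1 : (0:ℤ) ≤ t - 1 := by omega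
    simp only [Hd, if_pos h0, if_pos h1]
    have h2 : t.toNat = (t-1).toNat + 1 := by omega
    rw [h2, hsymm_concat]

/-- The list `[a p, a (p+1), …, a (p+len-1)]`. -/
def seg (a : ℕ → K) (p len : ℕ) : List K := List.ofFn fun u : Fin len => a (p + u)

lemma seg_cons (a : ℕ → K) (p len : ℕ) : seg a p (len+1) = a p :: seg a (p+1) len := by
  rw [seg, List.ofFn_succ]
  simp only [Fin.val_zero, add_zero, seg]
  congr 1
  exact congrArg List.ofFn (funext fun u => by rw [Fin.val_succ]; congr 1; omega)

lemma seg_concat (a : ℕ → K) (p len : ℕ) : seg a p (len+1) = seg a p len ++ [a (p+len)] := by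
  rw [seg, List.ofFn_succ', List.concat_eq_append]
  simp only [Fin.val_last, seg]
  congr 1

lemma seg_zero (a : ℕ → K) (p : ℕ) : seg a p 0 = [] := rfl

lemma key (a : ℕ → K) (i m : ℕ) :
    ∀ j, j ≤ m → Hd (seg a 0 (m+1)) (i : ℤ) =
      ∑ k ∈ Finset.range (j+1),
        Hd (seg a 0 (j-k+1)) (k : ℤ) * Hd (seg a (j-k) (m-(j-k)+1)) ((i : ℤ) - (k : ℤ)) := by
  intro j
  induction j with
  | zero =>
    intro _
    rw [Finset.sum_range_one]
    norm_num
    rw [show Hd (seg a 0 1) (0:ℤ) = 1 by simp [Hd, hsymmList_zero], one_mul]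
  | succ j ih =>
    intro hj
    rw [ih (by omega)]
    have hsplit : ∀ k ∈ Finset.range (j+1+1),
        Hd (seg a 0 (j+1-k+1)) (k:ℤ) * Hd (seg a (j+1-k) (m-(j+1-k)+1)) ((i:ℤ)-(k:ℤ))
        = Hd (seg a 0 (j+1-k)) (k:ℤ) * Hd (seg a (j+1-k) (m-(j+1-k)+1)) ((i:ℤ)-(k:ℤ))
          + a (j+1-k) * Hd (seg a 0 (j+1-k+1)) ((k:ℤ)-1) * Hd (seg a (j+1-k) (m-(j+1-k)+1)) ((i:ℤ)-(k:ℤ)) := by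
      intro k _
      rw [seg_concat a 0 (j+1-k), Nat.zero_add, Hd_concat]
      ring
    have eA : (∑ k ∈ Finset.range (j+1+1),
          Hd (seg a 0 (j+1-k)) (k:ℤ) * Hd (seg a (j+1-k) (m-(j+1-k)+1)) ((i:ℤ)-(k:ℤ)))
        = ∑ k ∈ Finset.range (j+1),
          Hd (seg a 0 (j-k+1)) (k:ℤ) * Hd (seg a (j+1-k) (m-(j+1-k)+1)) ((i:ℤ)-(k:ℤ)) := by
      rw [Finset.sum_range_succ]
      have h0 : Hd (seg a 0 (j+1-(j+1))) (((j+1:ℕ)):ℤ) = 0 := by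
        rw [Nat.sub_self, seg_zero, Hd_nil (by exact_mod_cast Nat.succ_ne_zero j)]
      rw [h0, zero_mul, add_zero]
      refine Finset.sum_congr rfl fun k hk => ?_
      have hk' : k ≤ j := by simpa [Nat.lt_succ_iff] using hk
      have e1 : j+1-k = j-k+1 := by omega
      rw [e1]
    have eB : (∑ k ∈ Finset.range (j+1+1),
          a (j+1-k) * Hd (seg a 0 (j+1-k+1)) ((k:ℤ)-1) * Hd (seg a (j+1-k) (m-(j+1-k)+1)) ((i:ℤ)-(k:ℤ)))
        = ∑ k ∈ Finset.range (j+1),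
          a (j-k) * Hd (seg a 0 (j-k+1)) (k:ℤ) * Hd (seg a (j-k) (m-(j-k)+1)) ((i:ℤ)-(k:ℤ)-1) := by
      rw [Finset.sum_range_succ']
      have h0 : a (j+1-0) * Hd (seg a 0 (j+1-0+1)) (((0:ℕ):ℤ)-1) *
          Hd (seg a (j+1-0) (m-(j+1-0)+1)) ((i:ℤ)-((0:ℕ):ℤ)) = 0 := by
        rw [Hd_neg _ (by norm_num)]; ring
      rw [h0, add_zero]
      refine Finset.sum_congr rfl fun k hk => ?_
      have hk' : k ≤ j := by simpa [Nat.lt_succ_iff] using hk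
      have e1 : j+1-(k+1) = j-k := by omega
      have e2 : ((k+1:ℕ):ℤ) - 1 = (k:ℤ) := by push_cast; ring
      have e3 : (i:ℤ) - ((k+1:ℕ):ℤ) = (i:ℤ) - (k:ℤ) - 1 := by push_cast; ring
      rw [e1, e2, e3]
    have eL : ∀ k ∈ Finset.range (j+1),
        Hd (seg a 0 (j-k+1)) (k:ℤ) * Hd (seg a (j-k) (m-(j-k)+1)) ((i:ℤ)-(k:ℤ))
        = Hd (seg a 0 (j-k+1)) (k:ℤ) * Hd (seg a (j+1-k) (m-(j+1-k)+1)) ((i:ℤ)-(k:ℤ))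
          + a (j-k) * Hd (seg a 0 (j-k+1)) (k:ℤ) * Hd (seg a (j-k) (m-(j-k)+1)) ((i:ℤ)-(k:ℤ)-1) := by
      intro k hk
      have hk' : k ≤ j := by simpa [Nat.lt_succ_iff] using hk
      have e1 : j+1-k = j-k+1 := by omega
      have e2 : m-(j+1-k)+1 = m-(j-k) := by omega
      rw [e2, e1, seg_cons a (j-k) (m-(j-k)), Hd_cons, ← seg_cons]
      ring
    rw [Finset.sum_congr rfl eL, Finset.sum_add_distrib,
      Finset.sum_congr rfl hsplit, Finset.sum_add_distrib, eA, eB]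

lemma ofFn_eq_ofFn {m n : ℕ} (f : Fin m → K) (g : Fin n → K) (h : m = n)
    (hfg : ∀ u : ℕ, (hu : u < m) → f ⟨u, hu⟩ = g ⟨u, h ▸ hu⟩) :
    List.ofFn f = List.ofFn g := by
  subst h
  congr 1
  funext u
  exact hfg u u.isLt

lemma SV_eq_Hd (v w : ℤ → K) (α β : ℤ) (n k : ℕ) :
    SV v w α β (n : ℤ) (k : ℤ) =
      Hd (List.ofFn fun u : Fin (k+1) => v (α + k - (u : ℕ)) * w (β + (u : ℕ)))
        ((n : ℤ) - (k : ℤ)) := by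
  rw [SV]
  by_cases h : k ≤ n
  · rw [if_pos ⟨Int.natCast_nonneg k, by exact_mod_cast h⟩, Hd, if_pos (by omega)]
    congr 1
  · have hneg : ¬ (0 ≤ (k:ℤ) ∧ (k:ℤ) ≤ (n:ℤ)) := by
      rintro ⟨_, hh⟩; exact h (by exact_mod_cast hh)
    rw [if_neg hneg, Hd_neg _ (by omega)]

theorem SV_LU_factorization (v w : ℤ → K) (α β : ℤ) (s r : ℕ) :
    (Matrix.of fun i j : Fin (r + 1) =>
        SV v w α (β - (j : ℕ)) ((s : ℕ) + (i : ℕ) + (j : ℕ)) ((s : ℕ) + (j : ℕ))) =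
      (Matrix.of fun i j : Fin (r + 1) =>
        SV v w α (β - (j : ℕ)) ((s : ℕ) + (i : ℕ)) ((s : ℕ) + (j : ℕ))) *
      (Matrix.of fun i j : Fin (r + 1) =>
        SV v w (α + (s : ℕ) + (i : ℕ)) (β - (j : ℕ)) ((j : ℕ)) (((j : ℕ) : ℤ) - ((i : ℕ) : ℤ))) := by
  ext i j
  rw [Matrix.mul_apply]
  simp only [Matrix.of_apply]
  set i' : ℕ := (i : ℕ) with hi'
  set j' : ℕ := (j : ℕ) with hj'
  set a : ℕ → K := fun t => v (α + (s:ℤ) + (j':ℤ) - (t:ℤ)) * w (β - (j':ℤ) + (t:ℤ)) with ha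
  -- LHS
  have hL : SV v w α (β - (j':ℤ)) ((s:ℤ) + (i':ℤ) + (j':ℤ)) ((s:ℤ) + (j':ℤ))
      = Hd (seg a 0 ((s + j') + 1)) ((i':ℕ):ℤ) := by
    have c1 : (s:ℤ) + (i':ℤ) + (j':ℤ) = ((s + i' + j' : ℕ):ℤ) := by push_cast; ring
    have c2 : (s:ℤ) + (j':ℤ) = ((s + j' : ℕ):ℤ) := by push_cast; ring
    rw [c1, c2, SV_eq_Hd]
    congr 1
    · refine ofFn_eq_ofFn _ _ rfl fun u hu => ?_
      simp only [ha]
      congr 1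
      · congr 1
        push_cast
        ring
      · congr 1
        push_cast
        ring
    · push_cast
      ring
  -- first factor
  have h1 : ∀ k : ℕ, k ≤ j' →
      SV v w α (β - (k:ℤ)) ((s:ℤ) + (i':ℤ)) ((s:ℤ) + (k:ℤ))
      = Hd (seg a (j' - k) (s + k + 1)) ((i':ℤ) - (k:ℤ)) := by
    intro k hk
    have c1 : (s:ℤ) + (i':ℤ) = ((s + i' : ℕ):ℤ) := by push_cast; ring
    have c2 : (s:ℤ) + (k:ℤ) = ((s + k : ℕ):ℤ) := by push_cast; ring
    rw [c1, c2, SV_eq_Hd]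
    congr 1
    · refine ofFn_eq_ofFn _ _ rfl fun u hu => ?_
      simp only [ha]
      have e : (((j' - k) + u : ℕ) : ℤ) = (j':ℤ) - (k:ℤ) + (u:ℤ) := by omega
      congr 1
      · congr 1
        rw [e]
        push_cast
        ring
      · congr 1
        rw [e]
        push_cast
        ring
    · push_cast
      ring
  -- second factor, k ≤ j'
  have h2 : ∀ k : ℕ, k ≤ j' →
      SV v w (α + (s:ℤ) + (k:ℤ)) (β - (j':ℤ)) ((j':ℤ)) ((j':ℤ) - (k:ℤ))
      = Hd (seg a 0 (j' - k + 1)) ((k:ℕ):ℤ) := by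
    intro k hk
    have c1 : (j':ℤ) - (k:ℤ) = ((j' - k : ℕ):ℤ) := by omega
    rw [c1, SV_eq_Hd]
    congr 1
    · refine ofFn_eq_ofFn _ _ rfl fun u hu => ?_
      simp only [ha]
      have e : (((j' - k) : ℕ) : ℤ) = (j':ℤ) - (k:ℤ) := by omega
      congr 1
      · congr 1
        rw [e]
        push_cast
        ring
      · congr 1
        push_cast
        ring
    · rw [show (((j' - k) : ℕ) : ℤ) = (j':ℤ) - (k:ℤ) by omega]
      push_cast
      ring
  -- second factor vanishes for k > j'
  have h3 : ∀ k : ℕ, j' < k →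
      SV v w (α + (s:ℤ) + (k:ℤ)) (β - (j':ℤ)) ((j':ℤ)) ((j':ℤ) - (k:ℤ)) = 0 := by
    intro k hk
    rw [SV, if_neg]
    rintro ⟨h0, _⟩
    omega
  rw [hL, key a i' (s + j') j' (Nat.le_add_left j' s)]
  rw [Fin.sum_univ_eq_sum_range (fun k => SV v w α (β - (k:ℤ)) ((s:ℤ) + (i':ℤ)) ((s:ℤ) + (k:ℤ)) *
    SV v w (α + (s:ℤ) + (k:ℤ)) (β - (j':ℤ)) ((j':ℤ)) ((j':ℤ) - (k:ℤ)))]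
  rw [← Finset.sum_subset (Finset.range_subset_range.mpr (show j' + 1 ≤ r + 1 by omega))
    (fun k _ hk => by
      rw [h3 k (by simpa [Nat.lt_succ_iff, not_lt] using hk), mul_zero])]
  refine Finset.sum_congr rfl fun k hk => ?_
  have hk' : k ≤ j' := by simpa [Nat.lt_succ_iff] using hk
  rw [h1 k hk', h2 k hk', show s + j' - (j' - k) = s + k by omega]
  ring
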